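/- arXiv:1910.12110 — 2 statements merged into one kernel-verified Lean document; each statement's English description precedes it below -/
import Mathlib

section
/- A finite simple graph G is edge-minimal 2-self-centered with disconnected complement if and only if G is a complete bipartite graph K_{k,ℓ} with k, ℓ ≥ 2. -/
open SimpleGraph

variable {V : Type*}

/-- Eccentricity of a vertex: maximum distance to any vertex. -/
noncomputable def ecc (G : SimpleGraph V) [Fintype V] (v : V) : ℕ :=
  Finset.univ.sup fun u => G.dist v u

/-- Diameter: maximum eccentricity. -/
noncomputable def gdiam (G : SimpleGraph V) [Fintype V] : ℕ :=
  Finset.univ.sup fun v => ecc G v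

/-- Radius: minimum eccentricity. -/
noncomputable def grad (G : SimpleGraph V) [Fintype V] : ℕ :=
  sInf (Set.range fun v => ecc G v)

/-- A graph is 2-self-centered if it is connected and diam = rad = 2. -/
def TwoSC (G : SimpleGraph V) [Fintype V] : Prop :=
  G.Connected ∧ gdiam G = 2 ∧ grad G = 2

/-!
If `Gᶜ` is disconnected, some nonempty proper vertex set `A` is completely joined in `G` to its
complement. Any graph containing such a complete cut in which every vertex has a non-neighbour
is 2-self-centered, so in an edge-minimal one an edge inside `A` or inside `Aᶜ` could be deleted:
hence `G` is complete bipartite with sides `A` and `Aᶜ`, each of size at least two because every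
vertex has a non-neighbour. Conversely `K_{k,ℓ}` with `k, ℓ ≥ 2` is 2-self-centered, and it is
triangle-free, so deleting an edge `uv` leaves `u` and `v` non-adjacent without a common
neighbour, i.e. at distance more than two.
-/

namespace SimpleGraph

variable {G : SimpleGraph V}

lemma Reachable.dist_le_two_iff {u v : V} (h : G.Reachable u v) :
    G.dist u v ≤ 2 ↔ u = v ∨ G.Adj u v ∨ (G.commonNeighbors u v).Nonempty := by
  constructor
  · intro hle
    obtain h0 | h1 | h2 : G.dist u v = 0 ∨ G.dist u v = 1 ∨ G.dist u v = 2 := by omega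
    · exact .inl (h.dist_eq_zero_iff.mp h0)
    · exact .inr (.inl (dist_eq_one_iff_adj.mp h1))
    · have : G.edist u v = 2 := by rw [← h.coe_dist_eq_edist, h2]; rfl
      exact .inr (.inr (edist_eq_two_iff.mp this).2.2)
  · rintro (rfl | hadj | ⟨w, hw⟩)
    · simp
    · simp [dist_eq_one_iff_adj.mpr hadj]
    · rw [mem_commonNeighbors] at hw
      simpa using G.dist_le (.cons hw.1 (.cons hw.2.symm .nil))

lemma Reachable.two_le_dist_iff {u v : V} (h : G.Reachable u v) :
    2 ≤ G.dist u v ↔ u ≠ v ∧ ¬ G.Adj u v := by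
  refine ⟨fun hle => ⟨fun huv => ?_, fun hadj => ?_⟩, fun ⟨hne, hadj⟩ =>
    h.one_lt_dist_of_ne_of_not_adj hne hadj⟩
  · simp [huv] at hle
  · simp [dist_eq_one_iff_adj.mpr hadj] at hle

lemma IsCompleteBetween.mem_iff_of_not_adj {A : Set V} (hG : G.IsCompleteBetween A Aᶜ)
    {u v : V} (h : ¬ G.Adj u v) : u ∈ A ↔ v ∈ A := by
  by_cases hu : u ∈ A
  · exact iff_of_true hu (not_not.mp fun hv => h (hG hu hv))
  · exact iff_of_false hu fun hv => h (hG hv hu).symm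

lemma IsCompleteBetween.nontrivial {A : Set V} (hG : G.IsCompleteBetween A Aᶜ)
    (hA : A.Nonempty) (hnon : ∀ v, ∃ u, v ≠ u ∧ ¬ G.Adj v u) : A.Nontrivial := by
  obtain ⟨a, ha⟩ := hA
  obtain ⟨u, hne, hadj⟩ := hnon a
  exact ⟨a, ha, u, (hG.mem_iff_of_not_adj hadj).mp ha, hne⟩

lemma not_connected_compl_of_isCompleteBetween_compl {A : Set V} (hA : A.Nonempty)
    (hAc : Aᶜ.Nonempty) (hG : G.IsCompleteBetween A Aᶜ) : ¬ Gᶜ.Connected := by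
  obtain ⟨a, ha⟩ := hA
  obtain ⟨b, hb⟩ := hAc
  intro hconn
  obtain ⟨p⟩ := hconn.preconnected a b
  obtain ⟨d, -, hd, hd'⟩ := p.exists_boundary_dart A ha hb
  exact ((compl_adj G _ _).mp d.adj).2 (hG hd hd')

lemma exists_isCompleteBetween_compl_of_not_connected_compl [Nonempty V]
    (h : ¬ Gᶜ.Connected) : ∃ A : Set V, A.Nonempty ∧ Aᶜ.Nonempty ∧ G.IsCompleteBetween A Aᶜ := by
  obtain ⟨a, b, hab⟩ : ∃ a b, ¬ Gᶜ.Reachable a b := by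
    by_contra! hreach
    exact h ⟨hreach⟩
  refine ⟨{x | Gᶜ.Reachable a x}, ⟨a, .refl a⟩, ⟨b, hab⟩, fun x hx y hy => ?_⟩
  by_contra hxy
  have hne : x ≠ y := fun h => hy (h ▸ hx)
  exact hy (hx.trans ((compl_adj G x y).mpr ⟨hne, hxy⟩).reachable)

lemma IsBipartiteWith.exists_ne_not_adj {s t : Set V} (hb : G.IsBipartiteWith s t)
    {v : V} (hv : v ∈ s) (hs : s.Nontrivial) : ∃ u, v ≠ u ∧ ¬ G.Adj v u := by
  obtain ⟨u, hu, hne⟩ := hs.exists_ne v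
  exact ⟨u, hne.symm, fun h => Set.disjoint_left.mp hb.disjoint hu (hb.mem_of_mem_adj hv h)⟩

lemma isBipartiteWith_compl_and_isCompleteBetween_compl_iff {A : Set V} :
    G.IsBipartiteWith A Aᶜ ∧ G.IsCompleteBetween A Aᶜ ↔ ∀ u v, G.Adj u v ↔ (u ∈ A ↔ v ∉ A) := by
  refine ⟨fun ⟨hb, hc⟩ u v => ⟨fun h => ?_, fun h => ?_⟩, fun h => ⟨⟨disjoint_compl_right, ?_⟩, ?_⟩⟩
  · rcases hb.mem_of_adj h with ⟨hu, hv⟩ | ⟨hu, hv⟩ <;> simp_all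
  · by_contra hadj
    have := hc.mem_iff_of_not_adj hadj
    tauto
  · intro u v huv
    rw [h] at huv
    by_cases hu : u ∈ A <;> simp_all
  · exact fun u hu v hv => (h u v).mpr (iff_of_true hu hv)

lemma nonempty_iso_completeBipartiteGraph {A : Set V}
    (hA : ∀ u v, G.Adj u v ↔ (u ∈ A ↔ v ∉ A)) : Nonempty (G ≃g completeBipartiteGraph A ↥Aᶜ) := by
  classical
  have hleft : ∀ u, ((Equiv.Set.sumCompl A).symm u).isLeft ↔ u ∈ A := fun u => by
    by_cases hu : u ∈ A
    · simp [Equiv.Set.sumCompl_symm_apply_of_mem hu, hu]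
    · simp [Equiv.Set.sumCompl_symm_apply_of_notMem hu, hu]
  refine ⟨⟨(Equiv.Set.sumCompl A).symm, fun {u v} => ?_⟩⟩
  rw [hA, completeBipartiteGraph_adj, ← Sum.not_isLeft, ← Sum.not_isLeft, hleft, hleft]
  tauto

lemma exists_iso_completeBipartiteGraph_fin_iff [Finite V] :
    (∃ k ℓ : ℕ, 2 ≤ k ∧ 2 ≤ ℓ ∧ Nonempty (G ≃g completeBipartiteGraph (Fin k) (Fin ℓ))) ↔
      ∃ A : Set V, A.Nontrivial ∧ Aᶜ.Nontrivial ∧ ∀ u v, G.Adj u v ↔ (u ∈ A ↔ v ∉ A) := by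
  constructor
  · rintro ⟨k, ℓ, hk, hℓ, ⟨e⟩⟩
    refine ⟨{v | (e v).isLeft}, ?_, ?_, fun u v => ?_⟩
    · exact ⟨e.symm (.inl ⟨0, by omega⟩), by simp, e.symm (.inl ⟨1, by omega⟩), by simp, by simp⟩
    · exact ⟨e.symm (.inr ⟨0, by omega⟩), by simp, e.symm (.inr ⟨1, by omega⟩), by simp, by simp⟩
    · rw [← e.map_adj_iff, completeBipartiteGraph_adj, ← Sum.not_isLeft, ← Sum.not_isLeft]
      simp only [Set.mem_ofPred_eq]
      tauto
  · rintro ⟨A, hA, hAc, hadj⟩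
    obtain ⟨e⟩ := nonempty_iso_completeBipartiteGraph hadj
    refine ⟨Nat.card A, Nat.card ↥Aᶜ, ?_, ?_, ⟨e.trans
      (completeBipartiteGraphCongr (Finite.equivFin A) (Finite.equivFin ↥Aᶜ))⟩⟩
    exacts [Finite.one_lt_card_iff_nontrivial.mpr hA.coe_sort,
      Finite.one_lt_card_iff_nontrivial.mpr hAc.coe_sort]

end SimpleGraph

section TwoSC

variable [Fintype V] {G : SimpleGraph V}

lemma ecc_le_iff {v : V} {n : ℕ} : ecc G v ≤ n ↔ ∀ u, G.dist v u ≤ n := by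
  simp [ecc]

lemma le_ecc_iff {v : V} {n : ℕ} (hn : 0 < n) : n ≤ ecc G v ↔ ∃ u, n ≤ G.dist v u := by
  simp [ecc, Finset.le_sup_iff hn]

lemma twoSC_iff_forall_ecc_eq_two : TwoSC G ↔ G.Connected ∧ ∀ v, ecc G v = 2 := by
  constructor
  · rintro ⟨hconn, hdiam, hrad⟩
    refine ⟨hconn, fun v => le_antisymm ?_ ?_⟩
    · exact hdiam ▸ Finset.le_sup (f := ecc G) (Finset.mem_univ v)
    · exact hrad ▸ Nat.sInf_le ⟨v, rfl⟩
  · rintro ⟨hconn, hecc⟩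
    have : Nonempty V := hconn.nonempty
    have hecc' : ecc G = fun _ => 2 := funext hecc
    refine ⟨hconn, ?_, ?_⟩
    · simp [gdiam, hecc', Finset.sup_const Finset.univ_nonempty]
    · simp [grad, hecc']

theorem twoSC_iff :
    TwoSC G ↔ G.Connected ∧
      (∀ u v, u ≠ v → ¬ G.Adj u v → (G.commonNeighbors u v).Nonempty) ∧
      ∀ v, ∃ u, v ≠ u ∧ ¬ G.Adj v u := by
  rw [twoSC_iff_forall_ecc_eq_two]
  refine and_congr_right fun hconn => ?_
  have hreach := hconn.preconnected
  have hecc : (∀ v, ecc G v = 2) ↔ (∀ u v, G.dist u v ≤ 2) ∧ ∀ v, ∃ u, 2 ≤ G.dist v u := by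
    simp only [le_antisymm_iff, ecc_le_iff, le_ecc_iff two_pos, forall_and]
  rw [hecc]
  refine and_congr (forall₂_congr fun u v => ?_) (forall_congr' fun v => exists_congr fun u => ?_)
  · rw [(hreach u v).dist_le_two_iff]
    tauto
  · exact (hreach v u).two_le_dist_iff

lemma twoSC_of_isCompleteBetween_compl {A : Set V} (hA : A.Nonempty) (hAc : Aᶜ.Nonempty)
    (hG : G.IsCompleteBetween A Aᶜ) (hnon : ∀ v, ∃ u, v ≠ u ∧ ¬ G.Adj v u) : TwoSC G := by
  obtain ⟨a, ha⟩ := hA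
  obtain ⟨b, hb⟩ := hAc
  refine twoSC_iff.mpr ⟨?_, fun u v _ hadj => ?_, hnon⟩
  · refine (connected_iff_exists_forall_reachable G).mpr ⟨a, fun v => ?_⟩
    by_cases hv : v ∈ A
    · exact (hG ha hb).reachable.trans (hG hv hb).symm.reachable
    · exact (hG ha hv).reachable
  · have huv := hG.mem_iff_of_not_adj hadj
    by_cases hu : u ∈ A
    · exact ⟨b, (mem_commonNeighbors _).mpr ⟨hG hu hb, hG (huv.mp hu) hb⟩⟩
    · exact ⟨a, (mem_commonNeighbors _).mpr ⟨(hG ha hu).symm, (hG ha (mt huv.mpr hu)).symm⟩⟩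

lemma not_twoSC_deleteEdges_of_cliqueFree (hG : G.CliqueFree 3) {e : Sym2 V}
    (he : e ∈ G.edgeSet) : ¬ TwoSC (G.deleteEdges {e}) := by
  classical
  induction e using Sym2.ind with
  | _ x y =>
  intro hT
  obtain ⟨-, hcommon, -⟩ := twoSC_iff.mp hT
  obtain ⟨w, hw⟩ := hcommon x y (G.ne_of_adj he) (by simp [deleteEdges_adj])
  rw [mem_commonNeighbors, deleteEdges_adj, deleteEdges_adj] at hw
  exact hG {x, y, w} (is3Clique_triple_iff.mpr ⟨he, hw.1.1, hw.2.1⟩)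

lemma isBipartiteWith_compl_of_forall_not_twoSC_deleteEdges {A : Set V}
    (hA : A.Nonempty) (hAc : Aᶜ.Nonempty) (hG : G.IsCompleteBetween A Aᶜ)
    (hnon : ∀ v, ∃ u, v ≠ u ∧ ¬ G.Adj v u)
    (hmin : ∀ e ∈ G.edgeSet, ¬ TwoSC (G.deleteEdges {e})) : G.IsBipartiteWith A Aᶜ := by
  refine ⟨disjoint_compl_right, fun x y hxy => ?_⟩
  by_contra hside
  apply hmin s(x, y) hxy
  refine twoSC_of_isCompleteBetween_compl hA hAc (fun u hu v hv => ?_) fun v => ?_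
  · refine deleteEdges_adj.mpr ⟨hG hu hv, ?_⟩
    rw [Set.mem_singleton_iff, Sym2.eq_iff]
    rintro (⟨rfl, rfl⟩ | ⟨rfl, rfl⟩)
    exacts [hside (.inl ⟨hu, hv⟩), hside (.inr ⟨hv, hu⟩)]
  · obtain ⟨u, hne, hadj⟩ := hnon v
    exact ⟨u, hne, fun h => hadj (deleteEdges_adj.mp h).1⟩

end TwoSC

/-- G is edge-minimal 2-self-centered with disconnected complement iff G is a complete
bipartite graph K_{k,ℓ} with k, ℓ ≥ 2. -/
theorem stmt_6 [Fintype V] (G : SimpleGraph V) :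
    (TwoSC G ∧ (∀ e ∈ G.edgeSet, ¬ TwoSC (G.deleteEdges {e})) ∧ ¬ Gᶜ.Connected) ↔
      ∃ k ℓ : ℕ, 2 ≤ k ∧ 2 ≤ ℓ ∧
        Nonempty (G ≃g completeBipartiteGraph (Fin k) (Fin ℓ)) := by
  simp only [exists_iso_completeBipartiteGraph_fin_iff,
    ← isBipartiteWith_compl_and_isCompleteBetween_compl_iff]
  constructor
  · rintro ⟨hT, hmin, hcompl⟩
    obtain ⟨hconn, -, hnon⟩ := twoSC_iff.mp hT
    have := hconn.nonempty
    obtain ⟨A, hA, hAc, hc⟩ := exists_isCompleteBetween_compl_of_not_connected_compl hcompl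
    have hcc : G.IsCompleteBetween Aᶜ Aᶜᶜ := (compl_compl A).symm ▸ hc.symm
    exact ⟨A, hc.nontrivial hA hnon, hcc.nontrivial hAc hnon,
      isBipartiteWith_compl_of_forall_not_twoSC_deleteEdges hA hAc hc hnon hmin, hc⟩
  · rintro ⟨A, hA, hAc, hb, hc⟩
    have hnon : ∀ v, ∃ u, v ≠ u ∧ ¬ G.Adj v u := fun v => by
      by_cases hv : v ∈ A
      exacts [hb.exists_ne_not_adj hv hA, hb.symm.exists_ne_not_adj hv hAc]
    exact ⟨twoSC_of_isCompleteBetween_compl hA.nonempty hAc.nonempty hc hnon,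
      fun _ he => not_twoSC_deleteEdges_of_cliqueFree (hb.isBipartite.cliqueFree (by norm_num)) he,
      not_connected_compl_of_isCompleteBetween_compl hA.nonempty hAc.nonempty hc⟩
end

section
/- The complete bipartite graph K_{k,ℓ} with k, ℓ ≥ 2 is an edge-minimal 2-self-centered graph. -/
open SimpleGraph

variable {V : Type*}

/-!
In `K_{α,β}` two vertices on opposite sides are adjacent and two distinct vertices on the same
side have a common neighbour, so once each side has two vertices every eccentricity is exactly 2.
After deleting an edge `ab`, the vertices `a` and `b` are no longer adjacent and still have no
common neighbour (a neighbour of `a` lies on `b`'s side), so their distance exceeds 2.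
-/

namespace SimpleGraph

variable {G : SimpleGraph V} {u v : V}

theorem dist_eq_two_iff :
    G.dist u v = 2 ↔ u ≠ v ∧ ¬G.Adj u v ∧ (G.commonNeighbors u v).Nonempty := by
  rw [← edist_eq_two_iff, dist, ENat.toNat_eq_iff two_ne_zero]
  rfl

theorem Reachable.two_lt_dist_iff (h : G.Reachable u v) :
    2 < G.dist u v ↔ u ≠ v ∧ ¬G.Adj u v ∧ G.commonNeighbors u v = ∅ := by
  rw [← two_lt_edist_iff, ← h.coe_dist_eq_edist]
  exact_mod_cast Iff.rfl

section completeBipartiteGraph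

variable {α β : Type*}

theorem completeBipartiteGraph_dist_inl_inl [Nonempty β] {a a' : α} (h : a ≠ a') :
    (completeBipartiteGraph α β).dist (.inl a) (.inl a') = 2 :=
  dist_eq_two_iff.2
    ⟨by simpa using h, by simp, ⟨.inr Classical.ofNonempty, by simp [mem_commonNeighbors]⟩⟩

theorem completeBipartiteGraph_dist_inr_inr [Nonempty α] {b b' : β} (h : b ≠ b') :
    (completeBipartiteGraph α β).dist (.inr b) (.inr b') = 2 :=
  dist_eq_two_iff.2
    ⟨by simpa using h, by simp, ⟨.inl Classical.ofNonempty, by simp [mem_commonNeighbors]⟩⟩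

theorem completeBipartiteGraph_dist_le_two [Nonempty α] [Nonempty β] (u v : α ⊕ β) :
    (completeBipartiteGraph α β).dist u v ≤ 2 := by
  by_cases huv : u = v
  · simp [huv]
  rcases u with a | b <;> rcases v with a' | b'
  · rw [completeBipartiteGraph_dist_inl_inl (by simpa using huv)]
  · exact (dist_eq_one_iff_adj.2 (by simp)).trans_le one_le_two
  · exact (dist_eq_one_iff_adj.2 (by simp)).trans_le one_le_two
  · rw [completeBipartiteGraph_dist_inr_inr (by simpa using huv)]

theorem completeBipartiteGraph_connected [Nonempty α] [Nonempty β] :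
    (completeBipartiteGraph α β).Connected := by
  obtain ⟨a⟩ := ‹Nonempty α›
  obtain ⟨b⟩ := ‹Nonempty β›
  refine (connected_iff_exists_forall_reachable _).2 ⟨.inl a, ?_⟩
  rintro (a' | b')
  · exact (Adj.reachable (v := .inr b) (by simp)).trans (Adj.reachable (by simp))
  · exact Adj.reachable (by simp)

theorem completeBipartiteGraph_exists_dist_eq_two [Nontrivial α] [Nontrivial β] (v : α ⊕ β) :
    ∃ w, (completeBipartiteGraph α β).dist v w = 2 := by
  rcases v with a | b
  · obtain ⟨a', h⟩ := exists_ne a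
    exact ⟨.inl a', completeBipartiteGraph_dist_inl_inl h.symm⟩
  · obtain ⟨b', h⟩ := exists_ne b
    exact ⟨.inr b', completeBipartiteGraph_dist_inr_inr h.symm⟩

theorem completeBipartiteGraph_deleteEdges_two_lt_dist {a : α} {b : β}
    (h : ((completeBipartiteGraph α β).deleteEdges {s(.inl a, .inr b)}).Reachable
      (.inl a) (.inr b)) :
    2 < ((completeBipartiteGraph α β).deleteEdges {s(.inl a, .inr b)}).dist
      (.inl a) (.inr b) := by
  refine h.two_lt_dist_iff.2 ⟨by simp, by simp, ?_⟩
  ext (a' | b') <;> simp [mem_commonNeighbors]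

end completeBipartiteGraph

end SimpleGraph

section Eccentricity

variable [Fintype V] {G : SimpleGraph V}

theorem dist_le_ecc (u v : V) : G.dist u v ≤ ecc G u :=
  Finset.le_sup (f := G.dist u) (Finset.mem_univ v)

theorem dist_le_gdiam (u v : V) : G.dist u v ≤ gdiam G :=
  (dist_le_ecc u v).trans (Finset.le_sup (f := ecc G) (Finset.mem_univ u))

theorem ecc_eq_of_forall_dist_le {n : ℕ} {v : V} (hle : ∀ u, G.dist v u ≤ n)
    (hex : ∃ w, G.dist v w = n) : ecc G v = n := by
  obtain ⟨w, hw⟩ := hex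
  exact le_antisymm (Finset.sup_le fun u _ => hle u) (hw ▸ dist_le_ecc v w)

theorem twoSC_of_forall_ecc_eq_two [Nonempty V] (hconn : G.Connected) (hecc : ∀ v, ecc G v = 2) :
    TwoSC G := by
  have hecc' : ecc G = fun _ => 2 := funext hecc
  refine ⟨hconn, ?_, ?_⟩
  · rw [gdiam, hecc', Finset.sup_const Finset.univ_nonempty]
  · rw [grad, hecc', Set.range_const, csInf_singleton]

theorem TwoSC.dist_le_two (h : TwoSC G) (u v : V) : G.dist u v ≤ 2 :=
  h.2.1 ▸ dist_le_gdiam u v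

end Eccentricity

/-- The complete bipartite graph K_{k,ℓ} with k, ℓ ≥ 2 is an edge-minimal 2-self-centered
graph. -/
theorem stmt_7 (k ℓ : ℕ) (hk : 2 ≤ k) (hl : 2 ≤ ℓ) :
    TwoSC (completeBipartiteGraph (Fin k) (Fin ℓ)) ∧
      ∀ e ∈ (completeBipartiteGraph (Fin k) (Fin ℓ)).edgeSet,
        ¬ TwoSC ((completeBipartiteGraph (Fin k) (Fin ℓ)).deleteEdges {e}) := by
  have : Nontrivial (Fin k) := Fin.nontrivial_iff_two_le.2 hk
  have : Nontrivial (Fin ℓ) := Fin.nontrivial_iff_two_le.2 hl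
  refine ⟨twoSC_of_forall_ecc_eq_two completeBipartiteGraph_connected fun v =>
    ecc_eq_of_forall_dist_le (completeBipartiteGraph_dist_le_two v)
      (completeBipartiteGraph_exists_dist_eq_two v), ?_⟩
  rw [edgeSet_completeBipartiteGraph]
  rintro _ ⟨⟨a, b⟩, rfl⟩ hsc
  exact (completeBipartiteGraph_deleteEdges_two_lt_dist (hsc.1.preconnected _ _)).not_ge
    (hsc.dist_le_two _ _)
end
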